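/- Let f be a discrete Morse-Bott function on a finite abstract simplicial complex K, let C be a collection for f and σ ∈ C. Then the two numbers U(σ) = #{τ ∉ C : σ < τ and f(τ) < f(σ)} and D(σ) = #{ν ∉ C : ν < σ and f(ν) > f(σ)} are not both equal to 1. -/

import Mathlib

open Finset

noncomputable section
open scoped Classical

/-- `σ` is a facet of `τ`: `σ ⊆ τ` and `dim σ = dim τ − 1`. -/
def Facet (σ τ : Finset ℕ) : Prop := σ ⊆ τ ∧ σ.card + 1 = τ.card

/-- A finite abstract simplicial complex: a finite family of nonempty finite sets
closed under taking nonempty subsets. -/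
def IsComplex (K : Finset (Finset ℕ)) : Prop :=
  (∀ σ ∈ K, σ.Nonempty) ∧ ∀ σ ∈ K, ∀ ν, ν ⊆ σ → ν.Nonempty → ν ∈ K

/-- The closure of a set of cells: all nonempty subsets of its cells. -/
def closureOf (S : Finset (Finset ℕ)) : Finset (Finset ℕ) :=
  S.biUnion fun σ => σ.powerset.filter fun ν => ν ≠ ∅

/-- The graph on `C` joining two cells whenever their closures intersect is connected. -/
def ConnectedOn (C : Finset (Finset ℕ)) : Prop :=
  ∀ a ∈ C, ∀ b ∈ C,
    Relation.ReflTransGen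
      (fun x y => x ∈ C ∧ y ∈ C ∧ (closureOf {x} ∩ closureOf {y}).Nonempty) a b

/-- A nonempty set of cells of `K`, all with the same `f`-value, whose
closure-intersection graph is connected. -/
def IsPreCollection (K : Finset (Finset ℕ)) (f : Finset ℕ → ℝ) (C : Finset (Finset ℕ)) :
    Prop :=
  C ⊆ K ∧ C.Nonempty ∧ (∀ σ ∈ C, ∀ τ ∈ C, f σ = f τ) ∧ ConnectedOn C

/-- A collection for `f`: a maximal constant-value connected set of cells. -/
def IsCollection (K : Finset (Finset ℕ)) (f : Finset ℕ → ℝ) (C : Finset (Finset ℕ)) :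
    Prop :=
  IsPreCollection K f C ∧ ∀ C', IsPreCollection K f C' → C ⊆ C' → C' = C

/-- `#{τ ∉ C : σ < τ, f(τ) < f(σ)}`. -/
def UpCount (K : Finset (Finset ℕ)) (f : Finset ℕ → ℝ) (C : Finset (Finset ℕ))
    (σ : Finset ℕ) : ℕ :=
  (K.filter fun τ => τ ∉ C ∧ Facet σ τ ∧ f τ < f σ).card

/-- `#{ν ∉ C : ν < σ, f(ν) > f(σ)}`. -/
def DownCount (K : Finset (Finset ℕ)) (f : Finset ℕ → ℝ) (C : Finset (Finset ℕ))
    (σ : Finset ℕ) : ℕ :=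
  (K.filter fun ν => ν ∉ C ∧ Facet ν σ ∧ f σ < f ν).card

/-- A discrete Morse-Bott function on `K`. -/
def IsMorseBott (K : Finset (Finset ℕ)) (f : Finset ℕ → ℝ) : Prop :=
  ∀ C, IsCollection K f C → ∀ σ ∈ C, UpCount K f C σ ≤ 1 ∧ DownCount K f C σ ≤ 1

/-- `σ` is upward noncritical w.r.t. `C`. -/
def UpNoncrit (K : Finset (Finset ℕ)) (f : Finset ℕ → ℝ) (C : Finset (Finset ℕ))
    (σ : Finset ℕ) : Prop :=
  ∃ w ∈ K, w ∉ C ∧ Facet σ w ∧ f w < f σ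

/-- `σ` is downward noncritical w.r.t. `C`. -/
def DownNoncrit (K : Finset (Finset ℕ)) (f : Finset ℕ → ℝ) (C : Finset (Finset ℕ))
    (σ : Finset ℕ) : Prop :=
  ∃ w ∈ K, w ∉ C ∧ Facet w σ ∧ f σ < f w

/-- The reduced collection `C^red`: the cells of `C` that are neither upward nor
downward noncritical w.r.t. `C`. -/
def reducedOf (K : Finset (Finset ℕ)) (f : Finset ℕ → ℝ) (C : Finset (Finset ℕ)) :
    Finset (Finset ℕ) :=
  C.filter fun σ => ¬ UpNoncrit K f C σ ∧ ¬ DownNoncrit K f C σ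

/-- A noncritical pair: a two-element set `{σ, τ}` with `σ < τ` and `f σ ≥ f τ`. -/
def IsNoncritPair (f : Finset ℕ → ℝ) (S : Finset (Finset ℕ)) : Prop :=
  ∃ σ τ, Facet σ τ ∧ f τ ≤ f σ ∧ S = {σ, τ}

/-- A discrete Morse function in Forman's sense. -/
def IsDiscreteMorse (K : Finset (Finset ℕ)) (g : Finset ℕ → ℝ) : Prop :=
  ∀ σ ∈ K, (K.filter fun τ => Facet σ τ ∧ g τ ≤ g σ).card ≤ 1 ∧
    (K.filter fun ν => Facet ν σ ∧ g σ ≤ g ν).card ≤ 1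

/-- A critical cell of `g`. -/
def IsCritical (K : Finset (Finset ℕ)) (g : Finset ℕ → ℝ) (σ : Finset ℕ) : Prop :=
  σ ∈ K ∧ (K.filter fun τ => Facet σ τ ∧ g τ ≤ g σ).card = 0 ∧
    (K.filter fun ν => Facet ν σ ∧ g σ ≤ g ν).card = 0

/-
If `ν < σ < τ` with `f ν > f σ > f τ`, the interval `[ν, τ]` is a diamond: it contains a
second middle cell `σ'`. Looking at `τ` inside its own collection, `σ` already is its one
allowed higher-valued facet, so `f σ' ≤ f τ`; dually, at `ν`, `f ν ≤ f σ'`. Hence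
`f ν ≤ f σ' ≤ f τ < f σ < f ν`.
-/

lemma Facet.nonempty_right {ν σ : Finset ℕ} (h : Facet ν σ) : σ.Nonempty :=
  card_pos.mp (by rw [← h.2]; omega)

lemma Facet.exists_ne_between {ν σ τ : Finset ℕ} (hνσ : Facet ν σ) (hστ : Facet σ τ) :
    ∃ σ', σ' ≠ σ ∧ Facet ν σ' ∧ Facet σ' τ := by
  obtain ⟨a, ha⟩ : ∃ a, τ \ σ = {a} := card_eq_one.mp <| by
    rw [card_sdiff_of_subset hστ.1, ← hστ.2]; omega
  have haτ : a ∈ τ := (mem_sdiff.mp (ha ▸ mem_singleton_self a)).1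
  have haσ : a ∉ σ := (mem_sdiff.mp (ha ▸ mem_singleton_self a)).2
  have haν : a ∉ ν := fun h => haσ (hνσ.1 h)
  have hcard : (insert a ν).card = ν.card + 1 := card_insert_of_notMem haν
  refine ⟨insert a ν, fun h => haσ (h ▸ mem_insert_self a ν),
    ⟨subset_insert a ν, hcard.symm⟩, ⟨?_, by rw [hcard, hνσ.2, hστ.2]⟩⟩
  exact insert_subset haτ (hνσ.1.trans hστ.1)

lemma exists_isCollection_mem {K : Finset (Finset ℕ)} (f : Finset ℕ → ℝ) {τ : Finset ℕ}
    (hτ : τ ∈ K) : ∃ C, IsCollection K f C ∧ τ ∈ C := by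
  set S := K.powerset.filter fun C => IsPreCollection K f C ∧ τ ∈ C
  have hsingleton : {τ} ∈ S := by
    simp only [S, mem_filter, mem_powerset, singleton_subset_iff, mem_singleton_self, and_true]
    refine ⟨hτ, singleton_subset_iff.mpr hτ, singleton_nonempty τ, ?_, ?_⟩ <;>
      intro a ha b hb <;> rw [mem_singleton.mp ha, mem_singleton.mp hb]
  obtain ⟨C, hCS, hmax⟩ := S.exists_max_image card ⟨_, hsingleton⟩
  simp only [S, mem_filter, mem_powerset] at hCS
  refine ⟨C, ⟨hCS.2.1, fun C' hC' hCC' => ?_⟩, hCS.2.2⟩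
  have hC'S : C' ∈ S := mem_filter.mpr ⟨mem_powerset.mpr hC'.1, hC', hCC' hCS.2.2⟩
  exact (eq_of_subset_of_card_le hCC' (hmax C' hC'S)).symm

lemma IsCollection.notMem_of_ne {K C : Finset (Finset ℕ)} {f : Finset ℕ → ℝ}
    (hC : IsCollection K f C) {τ x : Finset ℕ} (hτ : τ ∈ C) (hx : f x ≠ f τ) : x ∉ C :=
  fun h => hx (hC.1.2.2.1 x h τ hτ)

namespace IsMorseBott

variable {K : Finset (Finset ℕ)} {f : Finset ℕ → ℝ}

lemma le_of_facet_ne (hf : IsMorseBott K f) {σ σ' τ : Finset ℕ} (hτ : τ ∈ K) (hσ : σ ∈ K)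
    (hσ' : σ' ∈ K) (hστ : Facet σ τ) (hσ'τ : Facet σ' τ) (hne : σ ≠ σ') (hlt : f τ < f σ) :
    f σ' ≤ f τ := by
  by_contra! hlt'
  obtain ⟨C, hC, hτC⟩ := exists_isCollection_mem f hτ
  have hdown : 1 < DownCount K f C τ := one_lt_card.mpr
    ⟨σ, mem_filter.mpr ⟨hσ, hC.notMem_of_ne hτC hlt.ne', hστ, hlt⟩,
     σ', mem_filter.mpr ⟨hσ', hC.notMem_of_ne hτC hlt'.ne', hσ'τ, hlt'⟩, hne⟩
  exact absurd (hf C hC τ hτC).2 hdown.not_ge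

lemma le_of_cofacet_ne (hf : IsMorseBott K f) {ν σ σ' : Finset ℕ} (hν : ν ∈ K) (hσ : σ ∈ K)
    (hσ' : σ' ∈ K) (hνσ : Facet ν σ) (hνσ' : Facet ν σ') (hne : σ ≠ σ') (hlt : f σ < f ν) :
    f ν ≤ f σ' := by
  by_contra! hlt'
  obtain ⟨C, hC, hνC⟩ := exists_isCollection_mem f hν
  have hup : 1 < UpCount K f C ν := one_lt_card.mpr
    ⟨σ, mem_filter.mpr ⟨hσ, hC.notMem_of_ne hνC hlt.ne, hνσ, hlt⟩,
     σ', mem_filter.mpr ⟨hσ', hC.notMem_of_ne hνC hlt'.ne, hνσ', hlt'⟩, hne⟩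
  exact absurd (hf C hC ν hνC).1 hup.not_ge

lemma not_lt_lt_of_facet_facet (hK : IsComplex K) (hf : IsMorseBott K f)
    {ν σ τ : Finset ℕ} (hν : ν ∈ K) (hτ : τ ∈ K) (hνσ : Facet ν σ) (hστ : Facet σ τ) :
    ¬ (f τ < f σ ∧ f σ < f ν) := by
  rintro ⟨hτσ, hσν⟩
  obtain ⟨σ', hne, hνσ', hσ'τ⟩ := hνσ.exists_ne_between hστ
  have hσ : σ ∈ K := hK.2 τ hτ σ hστ.1 hνσ.nonempty_right
  have hσ' : σ' ∈ K := hK.2 τ hτ σ' hσ'τ.1 hνσ'.nonempty_right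
  have hσ'τ_le : f σ' ≤ f τ := hf.le_of_facet_ne hτ hσ hσ' hστ hσ'τ hne.symm hτσ
  have hνσ'_le : f ν ≤ f σ' := hf.le_of_cofacet_ne hν hσ hσ' hνσ hνσ' hne.symm hσν
  linarith

end IsMorseBott

theorem statement0_general (K : Finset (Finset ℕ)) (hK : IsComplex K) (f : Finset ℕ → ℝ)
    (hf : IsMorseBott K f) (C : Finset (Finset ℕ))
    (σ : Finset ℕ) :
    ¬ (UpCount K f C σ = 1 ∧ DownCount K f C σ = 1) := by
  rintro ⟨hU, hD⟩
  obtain ⟨τ, hτ⟩ := card_pos.mp (hU ▸ Nat.one_pos)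
  obtain ⟨ν, hν⟩ := card_pos.mp (hD ▸ Nat.one_pos)
  obtain ⟨hτK, -, hστ, hτσ⟩ := mem_filter.mp hτ
  obtain ⟨hνK, -, hνσ, hσν⟩ := mem_filter.mp hν
  exact hf.not_lt_lt_of_facet_facet hK hνK hτK hνσ hστ ⟨hτσ, hσν⟩

/-- For a discrete Morse-Bott function `f`, a collection `C` and `σ ∈ C`,
the counts `U(σ)` and `D(σ)` are not both equal to `1`. -/
theorem statement0 (K : Finset (Finset ℕ)) (hK : IsComplex K) (f : Finset ℕ → ℝ)
    (hf : IsMorseBott K f) (C : Finset (Finset ℕ)) (hC : IsCollection K f C)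
    (σ : Finset ℕ) (hσ : σ ∈ C) :
    ¬ (UpCount K f C σ = 1 ∧ DownCount K f C σ = 1) :=
  statement0_general K hK f hf C σ
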